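/- For |q| < 1, ρ = e^{2πi/3}, a complex, and nonnegative integer n: the sum over triples (j,k,ℓ) of nonnegative integers with j + k + ℓ = n of (a;q)_j (a;q)_k (a;q)_ℓ ρ^{k+2ℓ} / ((q;q)_j (q;q)_k (q;q)_ℓ) equals 0 if 3 does not divide n, and equals (a^3; q^3)_m / (q^3; q^3)_m if n = 3m. -/

import Mathlib

/-!
The series `B(x) = ∑ (a;q)ₙ/(q;q)ₙ xⁿ` (which is `(ax;q)_∞/(x;q)_∞` by the q-binomial
theorem) is characterised by the functional equation `(1 - x) B(x) = (1 - a x) B(q x)`. The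
left-hand side of the identity is the `n`-th coefficient of `F(x) = B(x) B(ρx) B(ρ²x)`, and since
`(1 - y)(1 - ρy)(1 - ρ²y) = 1 - y³`, multiplying the three functional equations gives
`(1 - x³) F(x) = (1 - a³x³) F(qx)`. Comparing coefficients, `F` is a series in `x³` whose
coefficients satisfy the recursion of `(a³;q³)ₘ/(q³;q³)ₘ`.
-/

open Finset Filter

noncomputable def qp (q x : ℂ) (k : ℕ) : ℂ := ∏ j ∈ Finset.range k, (1 - x * q ^ j)

noncomputable def qpInf (q x : ℂ) : ℂ := ∏' j : ℕ, (1 - x * q ^ j)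

noncomputable def qpz (q x : ℂ) (n : ℤ) : ℂ := qpInf q x / qpInf q (x * q ^ n)

noncomputable def zeta (r : ℕ) : ℂ := Complex.exp (2 * Real.pi * Complex.I / r)

open PowerSeries

theorem one_sub_pow_ne_zero_of_norm_lt_one {K : Type*} [NormedDivisionRing K] {q : K}
    (hq : ‖q‖ < 1) {m : ℕ} (hm : m ≠ 0) : 1 - q ^ m ≠ 0 := by
  rw [sub_ne_zero]
  intro h
  have : ‖q ^ m‖ < 1 := by rw [norm_pow]; exact pow_lt_one₀ (norm_nonneg q) hq hm
  simp [← h] at this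

theorem eq_of_mul_succ_eq_mul {M : Type*} [Mul M] [Zero M] [IsLeftCancelMulZero M]
    {α β u v : ℕ → M} (hα : ∀ m, α m ≠ 0) (hu : ∀ m, α m * u (m + 1) = β m * u m)
    (hv : ∀ m, α m * v (m + 1) = β m * v m) (h0 : u 0 = v 0) : u = v := by
  funext m
  induction m with
  | zero => exact h0
  | succ m ih => exact mul_left_cancel₀ (hα m) (by rw [hu, hv, ih])

theorem one_sub_mul_one_sub_mul_one_sub {R : Type*} [CommRing R] {ρ : R}
    (hρ : 1 + ρ + ρ ^ 2 = 0) (Y : R) :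
    (1 - Y) * (1 - ρ * Y) * (1 - ρ ^ 2 * Y) = 1 - Y ^ 3 := by
  linear_combination (-Y + ρ * Y ^ 2 - (ρ - 1) * Y ^ 3) * hρ

namespace PowerSeries

theorem rescale_C {R : Type*} [CommSemiring R] (a b : R) : rescale b (C a) = C a := by
  ext n
  rw [coeff_rescale, coeff_C]
  split_ifs with h <;> simp [h]

theorem coeff_prod_fin {R : Type*} [CommSemiring R] {k : ℕ} (f : Fin k → R⟦X⟧) (n : ℕ) :
    coeff n (∏ i, f i) = ∑ x ∈ Nat.antidiagonalTuple k n, ∏ i, coeff (x i) (f i) := by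
  rw [coeff_prod, ← piAntidiag_univ_fin_eq_antidiagonalTuple, finsuppAntidiag, sum_map]
  exact sum_attach (piAntidiag univ n) fun x => ∏ i, coeff (x i) (f i)

theorem coeff_one_sub_C_mul_X_pow_mul_of_lt {R : Type*} [CommRing R] (c : R) {d n : ℕ}
    (hn : n < d) (G : R⟦X⟧) : coeff n ((1 - C c * X ^ d) * G) = coeff n G := by
  rw [sub_mul, one_mul, mul_assoc, map_sub, coeff_C_mul, coeff_X_pow_mul', if_neg (by omega),
    mul_zero, sub_zero]

theorem coeff_add_one_sub_C_mul_X_pow_mul {R : Type*} [CommRing R] (c : R) (d n : ℕ)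
    (G : R⟦X⟧) : coeff (n + d) ((1 - C c * X ^ d) * G) = coeff (n + d) G - c * coeff n G := by
  rw [sub_mul, one_mul, mul_assoc, map_sub, coeff_C_mul, coeff_X_pow_mul]

theorem one_sub_X_pow_mul_eq_mul_rescale_iff {R : Type*} [CommRing R] {q c : R} {d : ℕ}
    {G : R⟦X⟧} :
    (1 - X ^ d) * G = (1 - C c * X ^ d) * rescale q G ↔
      (∀ n < d, (1 - q ^ n) * coeff n G = 0) ∧
        ∀ n, (1 - q ^ (n + d)) * coeff (n + d) G = (1 - c * q ^ n) * coeff n G := by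
  rw [show (1 : R⟦X⟧) - X ^ d = 1 - C 1 * X ^ d by simp, PowerSeries.ext_iff]
  constructor
  · intro h
    refine ⟨fun n hn => ?_, fun n => ?_⟩
    · have := h n
      rw [coeff_one_sub_C_mul_X_pow_mul_of_lt _ hn, coeff_one_sub_C_mul_X_pow_mul_of_lt _ hn,
        coeff_rescale] at this
      linear_combination this
    · have := h (n + d)
      rw [coeff_add_one_sub_C_mul_X_pow_mul, coeff_add_one_sub_C_mul_X_pow_mul, coeff_rescale,
        coeff_rescale, pow_add] at this
      linear_combination this
  · rintro ⟨hlow, hrec⟩ n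
    rcases lt_or_ge n d with hn | hn
    · rw [coeff_one_sub_C_mul_X_pow_mul_of_lt _ hn, coeff_one_sub_C_mul_X_pow_mul_of_lt _ hn,
        coeff_rescale]
      linear_combination hlow n hn
    · obtain ⟨m, rfl⟩ := Nat.exists_eq_add_of_le' hn
      rw [coeff_add_one_sub_C_mul_X_pow_mul, coeff_add_one_sub_C_mul_X_pow_mul, coeff_rescale,
        coeff_rescale, pow_add]
      linear_combination hrec m

end PowerSeries

theorem qp_succ (q x : ℂ) (n : ℕ) : qp q x (n + 1) = qp q x n * (1 - x * q ^ n) :=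
  prod_range_succ _ n

theorem qp_self_ne_zero {q : ℂ} (hq : ‖q‖ < 1) (n : ℕ) : qp q q n ≠ 0 :=
  prod_ne_zero_iff.2 fun j _ => by
    rw [← pow_succ']; exact one_sub_pow_ne_zero_of_norm_lt_one hq j.succ_ne_zero

noncomputable def qBinomialSeries (q a : ℂ) : PowerSeries ℂ := mk fun n => qp q a n / qp q q n

theorem coeff_qBinomialSeries_succ {q : ℂ} (hq : ‖q‖ < 1) (a : ℂ) (n : ℕ) :
    (1 - q ^ (n + 1)) * coeff (n + 1) (qBinomialSeries q a)
      = (1 - a * q ^ n) * coeff n (qBinomialSeries q a) := by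
  have hqq : qp q q (n + 1) = qp q q n * (1 - q ^ (n + 1)) := by rw [qp_succ, ← pow_succ']
  have hne := one_sub_pow_ne_zero_of_norm_lt_one hq n.succ_ne_zero
  have hqp := qp_self_ne_zero hq n
  simp only [qBinomialSeries, coeff_mk, hqq, qp_succ]
  field_simp

theorem one_sub_X_mul_qBinomialSeries {q : ℂ} (hq : ‖q‖ < 1) (a : ℂ) :
    (1 - X) * qBinomialSeries q a = (1 - C a * X) * rescale q (qBinomialSeries q a) := by
  simpa only [pow_one] using one_sub_X_pow_mul_eq_mul_rescale_iff.2
    ⟨fun n hn => by simp [Nat.lt_one_iff.1 hn], coeff_qBinomialSeries_succ hq a⟩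

theorem one_sub_C_mul_X_mul_rescale_qBinomialSeries {q : ℂ} (hq : ‖q‖ < 1) (a b : ℂ) :
    (1 - C b * X) * rescale b (qBinomialSeries q a)
      = (1 - C (a * b) * X) * rescale q (rescale b (qBinomialSeries q a)) := by
  have h := congrArg (rescale b) (one_sub_X_mul_qBinomialSeries hq a)
  rw [map_mul, map_mul, map_sub, map_sub, map_one, map_mul, rescale_X, rescale_C] at h
  rw [h, map_mul, rescale_rescale, rescale_rescale, mul_comm b q, mul_assoc]

noncomputable def qBinomialTriple (q a ρ : ℂ) : PowerSeries ℂ :=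
  qBinomialSeries q a * rescale ρ (qBinomialSeries q a) * rescale (ρ ^ 2) (qBinomialSeries q a)

theorem one_sub_X_pow_three_mul_qBinomialTriple {q : ℂ} (hq : ‖q‖ < 1) (a : ℂ) {ρ : ℂ}
    (hρ : 1 + ρ + ρ ^ 2 = 0) :
    (1 - X ^ 3) * qBinomialTriple q a ρ
      = (1 - C (a ^ 3) * X ^ 3) * rescale q (qBinomialTriple q a ρ) := by
  have hCρ : 1 + C ρ + C ρ ^ 2 = 0 := by
    rw [← map_pow, ← map_one C, ← map_add, ← map_add, hρ, map_zero]
  set B := qBinomialSeries q a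
  calc (1 - X ^ 3) * qBinomialTriple q a ρ
      = ((1 - X) * B) * ((1 - C ρ * X) * rescale ρ B)
          * ((1 - C (ρ ^ 2) * X) * rescale (ρ ^ 2) B) := by
        rw [← one_sub_mul_one_sub_mul_one_sub hCρ, qBinomialTriple, map_pow]; ring
    _ = ((1 - C a * X) * rescale q B) * ((1 - C (a * ρ) * X) * rescale q (rescale ρ B))
          * ((1 - C (a * ρ ^ 2) * X) * rescale q (rescale (ρ ^ 2) B)) := by
        rw [one_sub_X_mul_qBinomialSeries hq, one_sub_C_mul_X_mul_rescale_qBinomialSeries hq,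
          one_sub_C_mul_X_mul_rescale_qBinomialSeries hq]
    _ = (1 - C (a ^ 3) * X ^ 3) * rescale q (qBinomialTriple q a ρ) := by
        rw [map_pow, ← mul_pow, ← one_sub_mul_one_sub_mul_one_sub hCρ, qBinomialTriple,
          map_mul, map_mul, map_mul, map_mul, map_pow]
        ring

theorem coeff_qBinomialTriple (q a ρ : ℂ) (n : ℕ) :
    coeff n (qBinomialTriple q a ρ) = ∑ k ∈ Nat.antidiagonalTuple 3 n,
      qp q a (k 0) * qp q a (k 1) * qp q a (k 2) * ρ ^ (k 1 + 2 * k 2)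
        / (qp q q (k 0) * qp q q (k 1) * qp q q (k 2)) := by
  have h : qBinomialTriple q a ρ
      = ∏ i : Fin 3, rescale (ρ ^ (i : ℕ)) (qBinomialSeries q a) := by
    simp [qBinomialTriple, Fin.prod_univ_three, rescale_one]
  rw [h, coeff_prod_fin]
  refine sum_congr rfl fun k _ => ?_
  simp only [Fin.prod_univ_three, coeff_rescale, qBinomialSeries, coeff_mk]
  simp only [Fin.val_zero, Fin.val_one, Fin.val_two, pow_zero, one_pow, pow_one, ← pow_mul]
  ring

section FunctionalEquation

variable {q c : ℂ} {d : ℕ} {G : PowerSeries ℂ}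

theorem coeff_mul_add_eq_zero_of_functional_eq (hq : ‖q‖ < 1)
    (hG : (1 - X ^ d) * G = (1 - C c * X ^ d) * rescale q G) {r : ℕ} (hr₀ : r ≠ 0)
    (hrd : r < d) (m : ℕ) : coeff (d * m + r) G = 0 := by
  obtain ⟨hlow, hrec⟩ := one_sub_X_pow_mul_eq_mul_rescale_iff.1 hG
  have h₀ : coeff r G = 0 :=
    (mul_eq_zero.1 (hlow r hrd)).resolve_left (one_sub_pow_ne_zero_of_norm_lt_one hq hr₀)
  refine congrFun (eq_of_mul_succ_eq_mul (u := fun m => coeff (d * m + r) G) (v := 0)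
    (α := fun m => 1 - q ^ (d * m + r + d)) (β := fun m => 1 - c * q ^ (d * m + r))
    (fun m => one_sub_pow_ne_zero_of_norm_lt_one hq (by omega)) (fun m => ?_) (fun m => by simp)
    (by simpa using h₀)) m
  simpa only [mul_add_one, add_right_comm] using hrec (d * m + r)

theorem coeff_mul_eq_of_functional_eq (hq : ‖q‖ < 1) (hd : d ≠ 0)
    (hG : (1 - X ^ d) * G = (1 - C c * X ^ d) * rescale q G) (m : ℕ) :
    coeff (d * m) G = coeff 0 G * coeff m (qBinomialSeries (q ^ d) c) := by
  have hqd : ‖q ^ d‖ < 1 := by rw [norm_pow]; exact pow_lt_one₀ (norm_nonneg q) hq hd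
  refine congrFun (eq_of_mul_succ_eq_mul (u := fun m => coeff (d * m) G)
    (v := fun m => coeff 0 G * coeff m (qBinomialSeries (q ^ d) c))
    (α := fun m => 1 - q ^ (d * m + d)) (β := fun m => 1 - c * q ^ (d * m))
    (fun m => one_sub_pow_ne_zero_of_norm_lt_one hq (by omega)) (fun m => ?_) (fun m => ?_)
    (by simp [qBinomialSeries, qp])) m
  · simpa only [mul_add_one] using (one_sub_X_pow_mul_eq_mul_rescale_iff.1 hG).2 (d * m)
  · have := coeff_qBinomialSeries_succ hqd c m
    simp only [← pow_mul, mul_add_one] at this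
    linear_combination coeff 0 G * this

end FunctionalEquation

theorem one_add_zeta_three_add_sq : 1 + zeta 3 + zeta 3 ^ 2 = 0 := by
  have hζ : IsPrimitiveRoot (zeta 3) 3 := Complex.isPrimitiveRoot_exp 3 three_ne_zero
  simpa [sum_range_succ] using hζ.geom_sum_eq_zero (by norm_num)

theorem stmt4 (q a : ℂ) (hq : ‖q‖ < 1) (n : ℕ) :
    ∑ k ∈ Finset.Nat.antidiagonalTuple 3 n,
        qp q a (k 0) * qp q a (k 1) * qp q a (k 2) * zeta 3 ^ (k 1 + 2 * k 2)
          / (qp q q (k 0) * qp q q (k 1) * qp q q (k 2))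
      = if 3 ∣ n then qp (q ^ 3) (a ^ 3) (n / 3) / qp (q ^ 3) (q ^ 3) (n / 3) else 0 := by
  have hF := one_sub_X_pow_three_mul_qBinomialTriple hq a one_add_zeta_three_add_sq
  rw [← coeff_qBinomialTriple]
  split_ifs with h
  · obtain ⟨m, rfl⟩ := h
    rw [coeff_mul_eq_of_functional_eq hq three_ne_zero hF, Nat.mul_div_cancel_left m three_pos]
    simp [coeff_qBinomialTriple, Nat.antidiagonalTuple_zero_right, qBinomialSeries, qp]
  · rw [← Nat.div_add_mod n 3]
    exact coeff_mul_add_eq_zero_of_functional_eq hq hF (by omega) (Nat.mod_lt n three_pos) (n / 3)
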